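/- Let ρ, σ be quantum states on ℂ^N. Then Σ_{i,j} min(aᵢ, bⱼ)·|⟨aᵢ|bⱼ⟩|² ≥ 1 − √(‖ρ−σ‖₁ − (1/4)‖ρ−σ‖₁²), where ρ = Σᵢaᵢ|aᵢ⟩⟨aᵢ| and σ = Σⱼbⱼ|bⱼ⟩⟨bⱼ| are eigen-decompositions. -/

import Mathlib

open Matrix
open scoped Kronecker ComplexOrder

noncomputable section

def mfun {n : Type*} [Fintype n] [DecidableEq n] (f : ℝ → ℝ) (A : Matrix n n ℂ) : Matrix n n ℂ :=
  if h : A.IsHermitian then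
    h.eigenvectorUnitary.1 * Matrix.diagonal (fun i => (f (h.eigenvalues i) : ℂ)) *
      (star h.eigenvectorUnitary.1)
  else 0

def psqrt {n : Type*} [Fintype n] [DecidableEq n] (A : Matrix n n ℂ) : Matrix n n ℂ :=
  mfun Real.sqrt A

def mlog {n : Type*} [Fintype n] [DecidableEq n] (A : Matrix n n ℂ) : Matrix n n ℂ :=
  mfun Real.log A

def traceNorm {n : Type*} [Fintype n] [DecidableEq n] (A : Matrix n n ℂ) : ℝ :=
  ((psqrt (Aᴴ * A)).trace).re

def fid {n : Type*} [Fintype n] [DecidableEq n] (ρ σ : Matrix n n ℂ) : ℝ :=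
  traceNorm (psqrt ρ * psqrt σ)

def vNEntropy {n : Type*} [Fintype n] [DecidableEq n] (A : Matrix n n ℂ) : ℝ :=
  - ((A * mlog A).trace).re

def relEnt {n : Type*} [Fintype n] [DecidableEq n] (ρ σ : Matrix n n ℂ) : ℝ :=
  ((ρ * mlog ρ).trace - (ρ * mlog σ).trace).re


/-!
Write `ρ = A²`, `σ = B²` with `A = √ρ`, `B = √σ`. The Powers–Størmer inequality
`Tr (A - B)² ≤ ‖A² - B²‖₁` gives `2 - 2 Tr (√ρ √σ) ≤ ‖ρ - σ‖₁`, and `Tr (√ρ √σ)` is the classical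
fidelity `F = ∑ √(R R')` of the two distributions `R i j = aᵢ |⟨aᵢ|bⱼ⟩|²` and
`R' i j = bⱼ |⟨aᵢ|bⱼ⟩|²`, whose `∑ min (R, R')` is the left-hand side. Classically
`∑ min (R, R') = 1 - ‖R - R'‖₁ / 2` and, by Cauchy–Schwarz applied to
`|R - R'| = |√R - √R'| (√R + √R')`, `‖R - R'‖₁ ≤ 2 √(1 - F²)`; finally
`1 - F² ≤ T - T² / 4` once `0 ≤ 1 - T / 2 ≤ F` for `T = ‖ρ - σ‖₁ ≤ 2`.
-/

section ClassicalFidelity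
variable {ι : Type*} [Fintype ι]

def classicalFidelity (P Q : ι → ℝ) : ℝ := ∑ i, √(P i) * √(Q i)

variable {P Q : ι → ℝ}

lemma sum_min_eq_one_sub_half_sum_abs_sub (hP : ∑ i, P i = 1) (hQ : ∑ i, Q i = 1) :
    ∑ i, min (P i) (Q i) = 1 - (∑ i, |P i - Q i|) / 2 := by
  have h : ∀ i, min (P i) (Q i) = (P i + Q i - |P i - Q i|) / 2 := fun i => by
    rcases le_total (P i) (Q i) with h | h
    · rw [min_eq_left h, abs_of_nonpos (sub_nonpos.mpr h)]; ring
    · rw [min_eq_right h, abs_of_nonneg (sub_nonneg.mpr h)]; ring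
  simp only [h, ← Finset.sum_div, Finset.sum_sub_distrib, Finset.sum_add_distrib, hP, hQ]
  ring

lemma sq_sum_abs_sub_le (hP0 : ∀ i, 0 ≤ P i) (hQ0 : ∀ i, 0 ≤ Q i) (hP : ∑ i, P i = 1)
    (hQ : ∑ i, Q i = 1) :
    (∑ i, |P i - Q i|) ^ 2 ≤ (2 - 2 * classicalFidelity P Q) * (2 + 2 * classicalFidelity P Q) := by
  have hP2 : ∀ i, √(P i) ^ 2 = P i := fun i => Real.sq_sqrt (hP0 i)
  have hQ2 : ∀ i, √(Q i) ^ 2 = Q i := fun i => Real.sq_sqrt (hQ0 i)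
  have hfactor : ∀ i, |P i - Q i| = |√(P i) - √(Q i)| * (√(P i) + √(Q i)) := fun i => by
    rw [← abs_of_nonneg (by positivity : 0 ≤ √(P i) + √(Q i)), ← abs_mul]
    congr 1
    linear_combination hQ2 i - hP2 i
  have hminus : ∑ i, |√(P i) - √(Q i)| ^ 2 = 2 - 2 * classicalFidelity P Q := by
    simp only [sq_abs, sub_sq, hP2, hQ2, Finset.sum_add_distrib, Finset.sum_sub_distrib,
      hP, hQ, classicalFidelity, Finset.mul_sum, mul_assoc]
    ring
  have hplus : ∑ i, (√(P i) + √(Q i)) ^ 2 = 2 + 2 * classicalFidelity P Q := by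
    simp only [add_sq, hP2, hQ2, Finset.sum_add_distrib, hP, hQ, classicalFidelity,
      Finset.mul_sum, mul_assoc]
    ring
  simp only [hfactor, ← hminus, ← hplus]
  exact Finset.sum_mul_sq_le_sq_mul_sq _ _ _

lemma one_sub_sqrt_le_sum_min (hP0 : ∀ i, 0 ≤ P i) (hQ0 : ∀ i, 0 ≤ Q i) (hP : ∑ i, P i = 1)
    (hQ : ∑ i, Q i = 1) {T : ℝ} (hT : 2 - 2 * classicalFidelity P Q ≤ T) (hT2 : T ≤ 2) :
    1 - √(T - T ^ 2 / 4) ≤ ∑ i, min (P i) (Q i) := by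
  have hCS := sq_sum_abs_sub_le hP0 hQ0 hP hQ
  have hF : (1 - T / 2) ^ 2 ≤ classicalFidelity P Q ^ 2 := by
    have : 0 ≤ 1 - T / 2 := by linarith
    gcongr
    linarith
  have : (∑ i, |P i - Q i|) / 2 ≤ √(T - T ^ 2 / 4) := by
    refine Real.le_sqrt_of_sq_le ?_
    nlinarith
  rw [sum_min_eq_one_sub_half_sum_abs_sub hP hQ]
  linarith

end ClassicalFidelity

open scoped MatrixOrder

section TraceNorm

variable {n : Type*} [Fintype n] [DecidableEq n]

lemma mfun_eq_cfc {A : Matrix n n ℂ} (hA : A.IsHermitian) (f : ℝ → ℝ) : mfun f A = cfc f A := by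
  rw [mfun, dif_pos hA, hA.cfc_eq, IsHermitian.cfc, Unitary.conjStarAlgAut_apply]
  rfl

namespace Matrix

lemma traceNorm_eq_re_trace_abs (A : Matrix n n ℂ) : traceNorm A = (CFC.abs A).trace.re := by
  have hAA := posSemidef_conjTranspose_mul_self A
  rw [traceNorm, psqrt, mfun_eq_cfc hAA.1, CFC.abs, star_eq_conjTranspose,
    CFC.sqrt_eq_real_sqrt _ hAA.nonneg, cfcₙ_eq_cfc]

lemma traceNorm_neg (A : Matrix n n ℂ) : traceNorm (-A) = traceNorm A := by
  simp only [traceNorm_eq_re_trace_abs, CFC.abs_neg]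

lemma PosSemidef.traceNorm_eq {A : Matrix n n ℂ} (hA : A.PosSemidef) :
    traceNorm A = A.trace.re := by
  rw [traceNorm_eq_re_trace_abs, CFC.abs_of_nonneg A hA.nonneg]

lemma PosSemidef.re_trace_mul_nonneg {A B : Matrix n n ℂ} (hA : A.PosSemidef)
    (hB : B.PosSemidef) : 0 ≤ (A * B).trace.re := by
  have hAA : CFC.sqrt A * CFC.sqrt A = A := CFC.sqrt_mul_sqrt_self A hA.nonneg
  have hS : (CFC.sqrt A)ᴴ = CFC.sqrt A := (CFC.sqrt_nonneg A).posSemidef.1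
  have := (hB.conjTranspose_mul_mul_same (CFC.sqrt A)).trace_nonneg
  rw [hS, trace_mul_cycle, hAA] at this
  exact (Complex.nonneg_iff.mp this).1

lemma IsHermitian.posSemidef_abs_add_self {A : Matrix n n ℂ} (hA : A.IsHermitian) :
    (CFC.abs A + A).PosSemidef :=
  (CFC.abs_add_self A hA.isSelfAdjoint ▸ smul_nonneg zero_le_two (CFC.posPart_nonneg A)).posSemidef

lemma IsHermitian.posSemidef_abs_sub_self {A : Matrix n n ℂ} (hA : A.IsHermitian) :
    (CFC.abs A - A).PosSemidef :=
  (CFC.abs_sub_self A hA.isSelfAdjoint ▸ smul_nonneg zero_le_two (CFC.negPart_nonneg A)).posSemidef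

lemma re_trace_mul_le_traceNorm {U A : Matrix n n ℂ} (hA : A.IsHermitian) (hU₁ : -1 ≤ U)
    (hU₂ : U ≤ 1) : (U * A).trace.re ≤ traceNorm A := by
  have key : (CFC.abs A - U * A) + (CFC.abs A - U * A)
      = (1 - U) * (CFC.abs A + A) + (U - -1) * (CFC.abs A - A) := by noncomm_ring
  have hpos := (sub_nonneg.mpr hU₂).posSemidef.re_trace_mul_nonneg hA.posSemidef_abs_add_self
  have hneg := (sub_nonneg.mpr hU₁).posSemidef.re_trace_mul_nonneg hA.posSemidef_abs_sub_self
  have := congrArg (fun M => M.trace.re) key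
  simp only [trace_add, trace_sub, Complex.add_re, Complex.sub_re] at this
  rw [traceNorm_eq_re_trace_abs]
  linarith

def cfcSign (A : Matrix n n ℂ) : Matrix n n ℂ := cfc (fun x : ℝ ↦ (SignType.sign x : ℝ)) A

lemma IsHermitian.neg_one_le_cfcSign {A : Matrix n n ℂ} (hA : A.IsHermitian) :
    -1 ≤ cfcSign A := by
  simpa [cfcSign] using algebraMap_le_cfc _ (-1) A (fun x _ => by cases SignType.sign x <;> simp)
    (A.finite_real_spectrum.continuousOn _)

lemma cfcSign_le_one (A : Matrix n n ℂ) : cfcSign A ≤ 1 :=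
  cfc_le_one _ _ fun x _ => by cases SignType.sign x <;> simp

lemma IsHermitian.cfcSign_mul_self {A : Matrix n n ℂ} (hA : A.IsHermitian) :
    cfcSign A * A = CFC.abs A := by
  have : ContinuousOn (fun x : ℝ ↦ (SignType.sign x : ℝ)) (spectrum ℝ A) :=
    A.finite_real_spectrum.continuousOn _
  calc cfcSign A * A = cfcSign A * cfc id A := by rw [cfc_id ℝ A]
    _ = cfc (fun x : ℝ ↦ (SignType.sign x : ℝ) * id x) A := (cfc_mul ..).symm
    _ = cfc (‖·‖) A := cfc_congr fun x _ => sign_mul_self x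
    _ = CFC.abs A := (CFC.abs_eq_cfc_norm A hA).symm

lemma IsHermitian.self_mul_cfcSign {A : Matrix n n ℂ} (hA : A.IsHermitian) :
    A * cfcSign A = CFC.abs A := by
  rw [← hA.cfcSign_mul_self]
  simpa only [cfcSign, cfc_id ℝ A] using
    (cfc_commute_cfc (fun x : ℝ ↦ (SignType.sign x : ℝ)) id A).symm.eq

lemma traceNorm_add_le {A B : Matrix n n ℂ} (hA : A.IsHermitian) (hB : B.IsHermitian) :
    traceNorm (A + B) ≤ traceNorm A + traceNorm B := by
  have hAB := hA.add hB
  rw [traceNorm_eq_re_trace_abs, ← hAB.cfcSign_mul_self, Matrix.mul_add, trace_add,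
    Complex.add_re]
  exact add_le_add (re_trace_mul_le_traceNorm hA hAB.neg_one_le_cfcSign (cfcSign_le_one _))
    (re_trace_mul_le_traceNorm hB hAB.neg_one_le_cfcSign (cfcSign_le_one _))

lemma PosSemidef.traceNorm_sub_le {A B : Matrix n n ℂ} (hA : A.PosSemidef) (hB : B.PosSemidef) :
    traceNorm (A - B) ≤ A.trace.re + B.trace.re := by
  rw [sub_eq_add_neg, ← hA.traceNorm_eq, ← hB.traceNorm_eq, ← traceNorm_neg B]
  exact traceNorm_add_le hA.1 hB.1.neg

/-- The Powers–Størmer inequality. -/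
lemma PosSemidef.re_trace_sub_mul_sub_le_traceNorm {A B : Matrix n n ℂ} (hA : A.PosSemidef)
    (hB : B.PosSemidef) : ((A - B) * (A - B)).trace.re ≤ traceNorm (A * A - B * B) := by
  set C := A - B with hCdef
  have hC : C.IsHermitian := hA.1.sub hB.1
  have hsign : (cfcSign C * (A * A - B * B)).trace = (CFC.abs C * (A + B)).trace := by
    have hsplit : A * A - B * B + (A * A - B * B) = C * (A + B) + (A + B) * C := by
      rw [hCdef]; noncomm_ring
    have hleft : (cfcSign C * (C * (A + B))).trace = (CFC.abs C * (A + B)).trace := by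
      rw [← Matrix.mul_assoc, hC.cfcSign_mul_self]
    have hright : (cfcSign C * ((A + B) * C)).trace = (CFC.abs C * (A + B)).trace := by
      rw [← Matrix.mul_assoc, trace_mul_cycle, hC.self_mul_cfcSign]
    have h : (cfcSign C * (A * A - B * B)).trace + (cfcSign C * (A * A - B * B)).trace
        = (cfcSign C * (C * (A + B))).trace + (cfcSign C * ((A + B) * C)).trace := by
      rw [← trace_add, ← trace_add, ← Matrix.mul_add, ← Matrix.mul_add, hsplit]
    rw [hleft, hright] at h
    linear_combination h / 2
  have habs : (C * C).trace.re ≤ (CFC.abs C * (A + B)).trace.re := by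
    have h : CFC.abs C * (A + B) - C * C = (CFC.abs C - C) * A + (CFC.abs C + C) * B := by
      rw [hCdef]; noncomm_ring
    have h1 := hC.posSemidef_abs_sub_self.re_trace_mul_nonneg hA
    have h2 := hC.posSemidef_abs_add_self.re_trace_mul_nonneg hB
    have := congrArg (fun M => M.trace.re) h
    simp only [trace_add, trace_sub, Complex.add_re, Complex.sub_re] at this
    linarith
  have hbound := re_trace_mul_le_traceNorm
    (by simpa only [sq] using (hA.1.pow 2).sub (hB.1.pow 2)) hC.neg_one_le_cfcSign
    (cfcSign_le_one C)
  rw [hsign] at hbound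
  exact habs.trans hbound

end Matrix

end TraceNorm

section SpectralSum

namespace Matrix

variable {n ι κ : Type*} [Fintype n] [Fintype ι] [Fintype κ]

lemma norm_star_dotProduct_comm (u v : n → ℂ) : ‖star u ⬝ᵥ v‖ = ‖star v ⬝ᵥ u‖ := by
  rw [star_dotProduct, norm_star]

lemma trace_vecMulVec_mul_vecMulVec (u v : n → ℂ) :
    (vecMulVec u (star u) * vecMulVec v (star v)).trace = ((‖star u ⬝ᵥ v‖ ^ 2 : ℝ) : ℂ) := by
  rw [vecMulVec_mul_vecMulVec, trace_vecMulVec, dotProduct_smul, dotProduct_comm u,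
    star_dotProduct v u, smul_eq_mul, Complex.star_def]
  exact_mod_cast RCLike.mul_conj (star u ⬝ᵥ v)

lemma sum_vecMulVec_eq_one [DecidableEq n] {v : n → n → ℂ}
    (hv : ∀ i j, star (v i) ⬝ᵥ v j = if i = j then 1 else 0) :
    ∑ j, vecMulVec (v j) (star (v j)) = 1 := by
  have hrows : of v * (of v)ᴴ = 1 := by
    ext i j
    simpa [mul_apply, one_apply, dotProduct, mul_comm, eq_comm] using hv j i
  have hcols : (of v)ᵀ * ((of v)ᵀ)ᴴ = 1 := by
    rw [mul_eq_one_comm, conjTranspose_transpose_eq_transpose_conjTranspose, ← transpose_mul,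
      hrows, transpose_one]
  rw [← hcols]
  ext k l
  simp [sum_apply, vecMulVec_apply, mul_apply]

lemma sum_norm_dotProduct_sq_eq_one [DecidableEq n] {v : n → n → ℂ}
    (hv : ∀ i j, star (v i) ⬝ᵥ v j = if i = j then 1 else 0) {u : n → ℂ}
    (hu : star u ⬝ᵥ u = 1) : ∑ j, ‖star u ⬝ᵥ v j‖ ^ 2 = 1 := by
  have : ∑ j, ((‖star u ⬝ᵥ v j‖ ^ 2 : ℝ) : ℂ) = 1 := by
    simp_rw [← trace_vecMulVec_mul_vecMulVec, ← trace_sum, ← Finset.mul_sum,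
      sum_vecMulVec_eq_one hv, Matrix.mul_one, trace_vecMulVec, dotProduct_comm u, hu]
  exact_mod_cast this

lemma sum_fst_mul_norm_dotProduct_sq_eq_one [DecidableEq n] {a : n → ℝ} (ha1 : ∑ i, a i = 1)
    {av bv : n → n → ℂ} (hao : ∀ i j, star (av i) ⬝ᵥ av j = if i = j then 1 else 0)
    (hbo : ∀ i j, star (bv i) ⬝ᵥ bv j = if i = j then 1 else 0) :
    ∑ p : n × n, a p.1 * ‖star (av p.1) ⬝ᵥ bv p.2‖ ^ 2 = 1 := by
  have hrow : ∀ i, ∑ j, ‖star (av i) ⬝ᵥ bv j‖ ^ 2 = 1 := fun i =>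
    sum_norm_dotProduct_sq_eq_one hbo (by simpa using hao i i)
  simp_rw [Fintype.sum_prod_type, ← Finset.mul_sum, hrow, mul_one, ha1]

lemma sum_snd_mul_norm_dotProduct_sq_eq_one [DecidableEq n] {b : n → ℝ} (hb1 : ∑ j, b j = 1)
    {av bv : n → n → ℂ} (hao : ∀ i j, star (av i) ⬝ᵥ av j = if i = j then 1 else 0)
    (hbo : ∀ i j, star (bv i) ⬝ᵥ bv j = if i = j then 1 else 0) :
    ∑ p : n × n, b p.2 * ‖star (av p.1) ⬝ᵥ bv p.2‖ ^ 2 = 1 := by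
  rw [← (Equiv.prodComm _ _).sum_comp]
  simp_rw [Equiv.prodComm_apply, Prod.fst_swap, Prod.snd_swap, norm_star_dotProduct_comm (av _)]
  exact sum_fst_mul_norm_dotProduct_sq_eq_one hb1 hbo hao

def spectralSum (w : ι → ℝ) (v : ι → n → ℂ) : Matrix n n ℂ :=
  ∑ i, (w i : ℂ) • vecMulVec (v i) (star (v i))

lemma posSemidef_spectralSum {w : ι → ℝ} (hw : ∀ i, 0 ≤ w i) (v : ι → n → ℂ) :
    (spectralSum w v).PosSemidef :=
  posSemidef_sum _ fun i _ => (posSemidef_vecMulVec_self_star (v i)).smul (by exact_mod_cast hw i)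

lemma trace_spectralSum {v : ι → n → ℂ} (hv : ∀ i, star (v i) ⬝ᵥ v i = 1) (w : ι → ℝ) :
    (spectralSum w v).trace = ((∑ i, w i : ℝ) : ℂ) := by
  simp [spectralSum, trace_sum, dotProduct_comm _ (star _), hv]

lemma trace_spectralSum_mul_spectralSum (w : ι → ℝ) (v : ι → n → ℂ) (u : κ → ℝ)
    (v' : κ → n → ℂ) :
    (spectralSum w v * spectralSum u v').trace
      = ((∑ i, ∑ j, w i * u j * ‖star (v i) ⬝ᵥ v' j‖ ^ 2 : ℝ) : ℂ) := by
  simp only [spectralSum, Finset.sum_mul_sum, trace_sum, smul_mul_smul_comm, trace_smul,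
    trace_vecMulVec_mul_vecMulVec, smul_eq_mul]
  push_cast
  rfl

lemma spectralSum_mul_spectralSum [DecidableEq ι] {v : ι → n → ℂ}
    (hv : ∀ i j, star (v i) ⬝ᵥ v j = if i = j then 1 else 0) (w u : ι → ℝ) :
    spectralSum w v * spectralSum u v = spectralSum (w * u) v := by
  simp only [spectralSum, Finset.sum_mul_sum, smul_mul_smul_comm, vecMulVec_mul_vecMulVec, hv,
    ite_smul, one_smul, zero_smul, apply_ite (vecMulVec _), vecMulVec_zero]
  simp

lemma spectralSum_sqrt_mul_self [DecidableEq ι] {w : ι → ℝ} (hw : ∀ i, 0 ≤ w i)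
    {v : ι → n → ℂ} (hv : ∀ i j, star (v i) ⬝ᵥ v j = if i = j then 1 else 0) :
    spectralSum (fun i => √(w i)) v * spectralSum (fun i => √(w i)) v = spectralSum w v := by
  rw [spectralSum_mul_spectralSum hv]
  congr 1
  exact funext fun i => Real.mul_self_sqrt (hw i)

lemma traceNorm_spectralSum_sub_le_two [DecidableEq n] {a : ι → ℝ} {b : κ → ℝ}
    {av : ι → n → ℂ} {bv : κ → n → ℂ} (hav : ∀ i, star (av i) ⬝ᵥ av i = 1)
    (hbv : ∀ j, star (bv j) ⬝ᵥ bv j = 1) (hann : ∀ i, 0 ≤ a i) (hbnn : ∀ j, 0 ≤ b j)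
    (ha1 : ∑ i, a i = 1) (hb1 : ∑ j, b j = 1) :
    traceNorm (spectralSum a av - spectralSum b bv) ≤ 2 := by
  have := (posSemidef_spectralSum hann av).traceNorm_sub_le (posSemidef_spectralSum hbnn bv)
  rw [trace_spectralSum hav, trace_spectralSum hbv, ha1, hb1] at this
  norm_num at this
  exact this

lemma two_sub_two_mul_classicalFidelity_le_traceNorm_sub [DecidableEq n] [DecidableEq ι]
    [DecidableEq κ] {a : ι → ℝ} {b : κ → ℝ} {av : ι → n → ℂ} {bv : κ → n → ℂ}
    (hao : ∀ i j, star (av i) ⬝ᵥ av j = if i = j then 1 else 0)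
    (hbo : ∀ i j, star (bv i) ⬝ᵥ bv j = if i = j then 1 else 0)
    (hann : ∀ i, 0 ≤ a i) (hbnn : ∀ j, 0 ≤ b j) (ha1 : ∑ i, a i = 1) (hb1 : ∑ j, b j = 1) :
    2 - 2 * classicalFidelity (fun p : ι × κ => a p.1 * ‖star (av p.1) ⬝ᵥ bv p.2‖ ^ 2)
        (fun p => b p.2 * ‖star (av p.1) ⬝ᵥ bv p.2‖ ^ 2)
      ≤ traceNorm (spectralSum a av - spectralSum b bv) := by
  set A := spectralSum (fun i => √(a i)) av
  set B := spectralSum (fun j => √(b j)) bv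
  have hF : classicalFidelity (fun p : ι × κ => a p.1 * ‖star (av p.1) ⬝ᵥ bv p.2‖ ^ 2)
      (fun p => b p.2 * ‖star (av p.1) ⬝ᵥ bv p.2‖ ^ 2) = (A * B).trace.re := by
    simp only [classicalFidelity, Fintype.sum_prod_type, Real.sqrt_mul (hann _),
      Real.sqrt_mul (hbnn _), Real.sqrt_sq (norm_nonneg _), A, B,
      trace_spectralSum_mul_spectralSum, Complex.ofReal_re]
    exact Finset.sum_congr rfl fun i _ => Finset.sum_congr rfl fun j _ => by ring
  have hA : A.PosSemidef := posSemidef_spectralSum (fun i => Real.sqrt_nonneg (a i)) av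
  have hB : B.PosSemidef := posSemidef_spectralSum (fun j => Real.sqrt_nonneg (b j)) bv
  have hPS := hA.re_trace_sub_mul_sub_le_traceNorm hB
  have hexpand : (A - B) * (A - B) = A * A + B * B - A * B - B * A := by noncomm_ring
  rw [hexpand, spectralSum_sqrt_mul_self hann hao, spectralSum_sqrt_mul_self hbnn hbo] at hPS
  simp only [trace_add, trace_sub, trace_mul_comm B A, Complex.add_re, Complex.sub_re,
    trace_spectralSum (fun i => by simpa using hao i i),
    trace_spectralSum (fun j => by simpa using hbo j j), ha1, hb1, Complex.ofReal_re] at hPS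
  linarith

end Matrix

end SpectralSum

/-- Σ_{i,j} min(aᵢ,bⱼ)|⟨aᵢ|bⱼ⟩|² ≥ 1 − √(‖ρ−σ‖₁ − ¼‖ρ−σ‖₁²). -/
theorem stmt16 {N : ℕ} (ρ σ : Matrix (Fin N) (Fin N) ℂ)
    (a b : Fin N → ℝ) (av bv : Fin N → (Fin N → ℂ))
    (hao : ∀ i j, star (av i) ⬝ᵥ av j = if i = j then 1 else 0)
    (hbo : ∀ i j, star (bv i) ⬝ᵥ bv j = if i = j then 1 else 0)
    (hann : ∀ i, 0 ≤ a i) (hbnn : ∀ i, 0 ≤ b i)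
    (ha1 : ∑ i, a i = 1) (hb1 : ∑ i, b i = 1)
    (hρ : ρ = ∑ i, (a i : ℂ) • Matrix.vecMulVec (av i) (star (av i)))
    (hσ : σ = ∑ j, (b j : ℂ) • Matrix.vecMulVec (bv j) (star (bv j))) :
    1 - Real.sqrt (traceNorm (ρ - σ) - traceNorm (ρ - σ) ^ 2 / 4)
      ≤ ∑ i, ∑ j, min (a i) (b j) * ‖star (av i) ⬝ᵥ bv j‖ ^ 2 := by
  change ρ = spectralSum a av at hρ
  change σ = spectralSum b bv at hσ
  subst hρ hσ
  have hlow := two_sub_two_mul_classicalFidelity_le_traceNorm_sub hao hbo hann hbnn ha1 hb1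
  have hup := traceNorm_spectralSum_sub_le_two (fun i => by simpa using hao i i)
    (fun j => by simpa using hbo j j) hann hbnn ha1 hb1
  have key := one_sub_sqrt_le_sum_min (fun p => mul_nonneg (hann _) (sq_nonneg _))
    (fun p => mul_nonneg (hbnn _) (sq_nonneg _)) (sum_fst_mul_norm_dotProduct_sq_eq_one ha1 hao hbo)
    (sum_snd_mul_norm_dotProduct_sq_eq_one hb1 hao hbo) hlow hup
  simpa only [Fintype.sum_prod_type, min_mul_of_nonneg _ _ (sq_nonneg _)] using key
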